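/- (Lemma) For every d with 0 < d < π/2, the image ψ(D_d) of the strip D_d under the tanh-sinh transformation is a bounded subset of ℂ. -/

import Mathlib

open Real Complex

/-!
Write `w = (π/2) sinh z = x + iy`. Since `|sinh w|² = sinh² x + sin² y ≤ |cosh w|² + 1`, we get
`|tanh w| ≤ 1 + 1/|cosh w|`, so it suffices to keep `|cosh w|² = sinh² x + cos² y` away from zero
on the strip. For `z = u + iv` with `|v| < d` we have `x = (π/2) sinh u cos v` and
`y = (π/2) cosh u sin v`, with `cos v ≥ cos d > 0` and `|sin v| ≤ sin d < 1`: either `|sinh u|`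
is large, and then so is `|x|`, or `cosh u` is close enough to `1` that `|y|` stays below a bound
`B < π/2`, and then `cos y ≥ cos B > 0`.
-/

namespace Real

theorem cos_le_cos_of_abs_le {x d : ℝ} (hd : d ≤ π) (hx : |x| ≤ d) : cos d ≤ cos x := by
  rw [← cos_abs x]
  exact cos_le_cos_of_nonneg_of_le_pi (abs_nonneg x) hd hx

theorem abs_sin_le_sin_of_abs_le {x d : ℝ} (hd : d ≤ π / 2) (hx : |x| ≤ d) :
    |sin x| ≤ sin d := by
  obtain ⟨hlo, hhi⟩ := abs_le.1 hx
  refine abs_le.2 ⟨?_, sin_le_sin_of_le_of_le_pi_div_two (by linarith) hd hhi⟩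
  simpa using sin_le_sin_of_le_of_le_pi_div_two (x := -d) (by linarith) (by linarith) hlo

theorem cosh_le_one_add_abs_sinh (x : ℝ) : cosh x ≤ 1 + |sinh x| :=
  le_of_pow_le_pow_left₀ two_ne_zero (by positivity)
    (by nlinarith [cosh_sq x, sq_abs (sinh x), abs_nonneg (sinh x)])

end Real

namespace Complex

theorem sinh_re (z : ℂ) : (sinh z).re = Real.sinh z.re * Real.cos z.im := by
  rw [← re_add_im z]
  push_cast [sinh_add, cosh_mul_I, sinh_mul_I]
  simp [sinh_ofReal_re, cos_ofReal_re, cosh_ofReal_re, sin_ofReal_re]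

theorem sinh_im (z : ℂ) : (sinh z).im = Real.cosh z.re * Real.sin z.im := by
  rw [← re_add_im z]
  push_cast [sinh_add, cosh_mul_I, sinh_mul_I]
  simp [sinh_ofReal_re, cos_ofReal_re, cosh_ofReal_re, sin_ofReal_re]

theorem cosh_re (z : ℂ) : (cosh z).re = Real.cosh z.re * Real.cos z.im := by
  rw [← re_add_im z]
  push_cast [cosh_add, cosh_mul_I, sinh_mul_I]
  simp [sinh_ofReal_re, cos_ofReal_re, cosh_ofReal_re, sin_ofReal_re]

theorem cosh_im (z : ℂ) : (cosh z).im = Real.sinh z.re * Real.sin z.im := by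
  rw [← re_add_im z]
  push_cast [cosh_add, cosh_mul_I, sinh_mul_I]
  simp [sinh_ofReal_re, cos_ofReal_re, cosh_ofReal_re, sin_ofReal_re]

theorem norm_sinh_sq (z : ℂ) : ‖sinh z‖ ^ 2 = Real.sinh z.re ^ 2 + Real.sin z.im ^ 2 := by
  rw [Complex.sq_norm, normSq_apply, sinh_re, sinh_im]
  nlinarith [Real.sin_sq_add_cos_sq z.im, Real.cosh_sq z.re]

theorem norm_cosh_sq (z : ℂ) : ‖cosh z‖ ^ 2 = Real.sinh z.re ^ 2 + Real.cos z.im ^ 2 := by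
  rw [Complex.sq_norm, normSq_apply, cosh_re, cosh_im]
  nlinarith [Real.sin_sq_add_cos_sq z.im, Real.cosh_sq z.re]

theorem norm_sinh_le_norm_cosh_add_one (z : ℂ) : ‖sinh z‖ ≤ ‖cosh z‖ + 1 :=
  le_of_pow_le_pow_left₀ two_ne_zero (by positivity)
    (by nlinarith [norm_sinh_sq z, norm_cosh_sq z, Real.sin_sq_add_cos_sq z.im,
      norm_nonneg (cosh z)])

theorem norm_tanh_le_of_le_norm_cosh {m : ℝ} (hm : 0 < m) {z : ℂ} (h : m ≤ ‖cosh z‖) :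
    ‖tanh z‖ ≤ 1 + m⁻¹ := by
  have hc : 0 < ‖cosh z‖ := hm.trans_le h
  calc ‖tanh z‖ = ‖sinh z‖ / ‖cosh z‖ := by rw [tanh_eq_sinh_div_cosh, norm_div]
    _ ≤ (‖cosh z‖ + 1) / ‖cosh z‖ := by gcongr; exact norm_sinh_le_norm_cosh_add_one z
    _ = 1 + ‖cosh z‖⁻¹ := by field_simp
    _ ≤ 1 + m⁻¹ := by gcongr

theorem abs_sinh_re_le_norm_cosh (z : ℂ) : |Real.sinh z.re| ≤ ‖cosh z‖ :=
  abs_le_of_sq_le_sq (by nlinarith [norm_cosh_sq z, sq_nonneg (Real.cos z.im)]) (norm_nonneg _)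

theorem abs_cos_im_le_norm_cosh (z : ℂ) : |Real.cos z.im| ≤ ‖cosh z‖ :=
  abs_le_of_sq_le_sq (by nlinarith [norm_cosh_sq z, sq_nonneg (Real.sinh z.re)]) (norm_nonneg _)

theorem min_sinh_cos_le_norm_cosh {a B : ℝ} (hB : B ≤ π) {z : ℂ}
    (hz : a ≤ |z.re| ∨ |z.im| ≤ B) : min (Real.sinh a) (Real.cos B) ≤ ‖cosh z‖ := by
  rcases hz with hre | him
  · calc min (Real.sinh a) (Real.cos B) ≤ Real.sinh |z.re| :=
          min_le_of_left_le (Real.sinh_le_sinh.2 hre)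
      _ = |Real.sinh z.re| := (Real.abs_sinh _).symm
      _ ≤ ‖cosh z‖ := abs_sinh_re_le_norm_cosh z
  · calc min (Real.sinh a) (Real.cos B) ≤ Real.cos z.im :=
          min_le_of_right_le (Real.cos_le_cos_of_abs_le hB him)
      _ ≤ |Real.cos z.im| := le_abs_self _
      _ ≤ ‖cosh z‖ := abs_cos_im_le_norm_cosh z

theorem exists_le_abs_re_or_abs_im_le_half_pi_mul_sinh {d : ℝ} (hd0 : 0 < d) (hd : d < π / 2) :
    ∃ a > 0, ∃ B ∈ Set.Ico 0 (π / 2), ∀ z : ℂ, |z.im| < d →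
      a ≤ |((π / 2 : ℂ) * sinh z).re| ∨ |((π / 2 : ℂ) * sinh z).im| ≤ B := by
  set s := Real.sin d
  have hs0 : 0 < s := Real.sin_pos_of_pos_of_lt_pi hd0 (by linarith [pi_pos])
  have hs1 : s < 1 := by
    simpa using Real.sin_lt_sin_of_lt_of_le_pi_div_two (by linarith) le_rfl hd
  have hc : 0 < Real.cos d := Real.cos_pos_of_mem_Ioo ⟨by linarith, hd⟩
  -- `T` is chosen so that `|sinh u| < T` forces `cosh u * s < (1 + T) * s = (1 + s) / 2 < 1`.
  set T := (1 - s) / (2 * s)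
  have hT : 0 < T := div_pos (by linarith) (by positivity)
  have hTs : (1 + T) * s = (1 + s) / 2 := by simp only [T]; field_simp; ring
  refine ⟨π / 2 * T * Real.cos d, by positivity, π / 2 * ((1 + s) / 2),
    ⟨by positivity, by nlinarith [pi_pos]⟩, fun z hz => ?_⟩
  have hcos : Real.cos d ≤ Real.cos z.im := Real.cos_le_cos_of_abs_le (by linarith) hz.le
  have hsin : |Real.sin z.im| ≤ s := Real.abs_sin_le_sin_of_abs_le hd.le hz.le
  have hre : ((π / 2 : ℂ) * sinh z).re = π / 2 * (Real.sinh z.re * Real.cos z.im) := by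
    simp [sinh_re]
  have him : ((π / 2 : ℂ) * sinh z).im = π / 2 * (Real.cosh z.re * Real.sin z.im) := by
    simp [sinh_im]
  have hpi : |(π / 2 : ℝ)| = π / 2 := abs_of_pos (by positivity)
  simp only [hre, him, abs_mul, hpi, abs_of_pos (hc.trans_le hcos),
    abs_of_pos (Real.cosh_pos z.re)]
  rcases le_or_gt T |Real.sinh z.re| with hsinh | hsinh
  · left
    rw [mul_assoc]
    gcongr
  · right
    have hcosh : Real.cosh z.re ≤ 1 + T := (Real.cosh_le_one_add_abs_sinh _).trans (by linarith)
    rw [← hTs]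
    gcongr

end Complex

/-- For every `0 < d < π/2`, the image of the strip `D_d = {z : |Im z| < d}` under the
tanh-sinh transformation `ψ(z) = tanh((π/2)·sinh z)` is a bounded subset of `ℂ`. -/
theorem tanh_sinh_image_strip_bounded (d : ℝ) (hd0 : 0 < d) (hd : d < π / 2) :
    Bornology.IsBounded
      ((fun z : ℂ => Complex.tanh ((π / 2 : ℂ) * Complex.sinh z)) ''
        {z : ℂ | |z.im| < d}) := by
  obtain ⟨a, ha, B, ⟨hB0, hB⟩, hsplit⟩ := exists_le_abs_re_or_abs_im_le_half_pi_mul_sinh hd0 hd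
  set m := min (Real.sinh a) (Real.cos B)
  have hm : 0 < m := lt_min (Real.sinh_pos_iff.2 ha) (Real.cos_pos_of_mem_Ioo ⟨by linarith, hB⟩)
  refine (Metric.isBounded_closedBall (x := 0) (r := 1 + m⁻¹)).subset ?_
  rintro _ ⟨z, hz, rfl⟩
  exact mem_closedBall_zero_iff.2 <| norm_tanh_le_of_le_norm_cosh hm <|
    min_sinh_cos_le_norm_cosh (by linarith [pi_pos]) (hsplit z hz)
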